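/- arXiv:1802.04183 — 3 statements merged into one kernel-verified Lean document; each statement's English description precedes it below -/
import Mathlib

section
/- Let G be a K-IC structure with inner vertex set V_I that satisfies condition c1 but violates condition c2; say b_{i,j} = 1 for an inner vertex i and a vertex j ∈ V(G) \ V(T_i). Then in the combination Z_i = W_I ⊕ (⊕_{v ∈ V_NI(i)} W_v) of Construction-1 index code symbols over a field of characteristic 2, the message x_j occurs with coefficient 1 (it appears exactly once among the symbols W_v for v ∈ V_NI(i) and not in W_I); since j ∉ N^+_G(i), the user requesting x_i cannot decode x_i from Z_i. (Theorem 1, necessity of c2) -/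
namespace ICPaper

variable {V : Type*}

/-- A directed cycle: a nonempty list of distinct vertices, consecutive vertices joined by
edges, and an edge from the last vertex back to the first (positive length). -/
def IsCycle (E : V → V → Prop) (l : List V) : Prop :=
  l ≠ [] ∧ l.Nodup ∧ l.Chain' E ∧
    ∃ a b, l.getLast? = some a ∧ l.head? = some b ∧ E a b

/-- A directed path from `a` to `b`: consecutive vertices joined by edges, distinct vertices. -/
def IsPathList (E : V → V → Prop) (a b : V) (l : List V) : Prop :=
  l.Chain' E ∧ l.head? = some a ∧ l.getLast? = some b ∧ l.Nodup

/-- An I-path: a directed path from an inner vertex `a` to a different inner vertex `b`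
all of whose intermediate vertices are non-inner. -/
def IsIPath (E : V → V → Prop) (VI : Set V) (a b : V) (l : List V) : Prop :=
  a ∈ VI ∧ b ∈ VI ∧ a ≠ b ∧ IsPathList E a b l ∧
    ∀ v ∈ l, v ≠ a → v ≠ b → v ∉ VI

/-- `G = (V, E)` is a `K`-IC structure with inner vertex set `VI`:
(0) `|VI| = K`; (1) no cycle contains exactly one inner vertex (no I-cycle);
(2) between any ordered pair of distinct inner vertices there is exactly one I-path;
(3) every vertex and every edge lies on one of these I-paths. -/
def IsICStructure (E : V → V → Prop) (VI : Set V) (K : ℕ) : Prop :=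
  VI.ncard = K ∧
  (¬ ∃ l, IsCycle E l ∧ (∃! v, v ∈ l ∧ v ∈ VI)) ∧
  (∀ a ∈ VI, ∀ b ∈ VI, a ≠ b → ∃! l, IsIPath E VI a b l) ∧
  (∀ v : V, ∃ a b l, IsIPath E VI a b l ∧ v ∈ l) ∧
  (∀ u w : V, E u w → ∃ a b l, IsIPath E VI a b l ∧ [u, w] <:+: l)

/-- Vertex set of the rooted tree `T i`: the union of the I-paths starting at `i`. -/
def treeVerts (E : V → V → Prop) (VI : Set V) (i : V) : Set V :=
  {v | ∃ b l, IsIPath E VI i b l ∧ v ∈ l}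

/-- `(u, w)` is an edge of the rooted tree `T i`. -/
def treeEdge (E : V → V → Prop) (VI : Set V) (i u w : V) : Prop :=
  ∃ b l, IsIPath E VI i b l ∧ [u, w] <:+: l

/-- `V_NI(i)`: the non-inner vertices of the rooted tree `T i`. -/
def VNI (E : V → V → Prop) (VI : Set V) (i : V) : Set V :=
  treeVerts E VI i \ VI

/-- `N^+_{T i}(i)`: the out-neighbourhood of `i` in the rooted tree `T i`. -/
def NplusT (E : V → V → Prop) (VI : Set V) (i : V) : Set V :=
  {w | treeEdge E VI i i w}

/-- `N^+_G(v)`: the out-neighbourhood of `v` in `G`. -/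
def NplusG (E : V → V → Prop) (v : V) : Set V := {w | E v w}

/-- The quantity `|{v ∈ V_NI(i) : j ∈ N^+_G(v)}|`; this is `a_{i,j}` when
`j ∈ V_NI(i) \ N^+_{T i}(i)` and `b_{i,j}` when `j ∉ V(T i)`. -/
noncomputable def coeffCount (E : V → V → Prop) (VI : Set V) (i j : V) : ℕ :=
  {v | v ∈ VNI E VI i ∧ E v j}.ncard

/-- Condition c1: `a_{i,j}` is odd for every inner vertex `i` and every
`j ∈ V_NI(i) \ N^+_{T i}(i)`. -/
def CondC1 (E : V → V → Prop) (VI : Set V) : Prop :=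
  ∀ i ∈ VI, ∀ j ∈ VNI E VI i, j ∉ NplusT E VI i → Odd (coeffCount E VI i j)

/-- Condition c2: `b_{i,j} = 0` for every inner vertex `i` and every `j ∉ V(T i)`. -/
def CondC2 (E : V → V → Prop) (VI : Set V) : Prop :=
  ∀ i ∈ VI, ∀ j, j ∉ treeVerts E VI i → coeffCount E VI i j = 0

/-- Construction 1, symbol `W_I = ⊕_{k ∈ V_I} x_k`. -/
noncomputable def WI {F : Type*} [AddCommMonoid F] (VI : Set V) (x : V → F) : F :=
  ∑ᶠ k ∈ VI, x k

/-- Construction 1, symbol `W_j = x_j ⊕ (⊕_{q ∈ N^+_G(j)} x_q)`. -/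
noncomputable def Wsym {F : Type*} [AddCommMonoid F] (E : V → V → Prop) (x : V → F)
    (j : V) : F :=
  x j + ∑ᶠ q ∈ NplusG E j, x q

/-- Algorithm 1, the combination `Z_i = W_I ⊕ (⊕_{j ∈ V_NI(i)} W_j)`. -/
noncomputable def Z {F : Type*} [AddCommMonoid F] (E : V → V → Prop) (VI : Set V)
    (x : V → F) (i : V) : F :=
  WI VI x + ∑ᶠ j ∈ VNI E VI i, Wsym E x j

end ICPaper

/-!
Evaluating `Z_i` at the single-message vector `Pi.single j 1` reads off the coefficient of `x_j`.
As `j` is neither inner nor in `T_i`, `x_j` occurs neither in `W_I` nor as the leading term of any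
`W_v`, only in the neighbourhood sums, `b_{i,j} = 1` times. A decodable form `x_i + ∑_{k ∈ S} x_k`
with `S ⊆ N^+_G(i)` would give it coefficient `0`: an edge leaving the inner vertex `i` lies on an
I-path, which must start at `i`, so the edge ends inside `T_i`.
-/

theorem List.Nodup.getLast?_ne_of_infix {α : Type*} {l : List α} {u w : α} (hl : l.Nodup)
    (h : [u, w] <:+: l) : l.getLast? ≠ some u := by
  obtain ⟨s, t, rfl⟩ := h
  grind

theorem finsum_mem_pi_single' {α M : Type*} [DecidableEq α] [AddCommMonoid M] (s : Set α)
    (j : α) [Decidable (j ∈ s)] (c : M) : ∑ᶠ k ∈ s, Pi.single j c k = if j ∈ s then c else 0 := by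
  rw [finsum_mem_def, finsum_eq_single _ j fun k hk => by simp [Pi.single_eq_of_ne hk]]
  simp [Set.indicator_apply]

theorem finsum_mem_const_eq_ncard_smul {α M : Type*} [AddCommMonoid M] (s : Set α) (c : M) :
    ∑ᶠ _ ∈ s, c = s.ncard • c := by
  rcases s.finite_or_infinite with hs | hs
  · rw [finsum_mem_eq_finite_toFinset_sum _ hs, Finset.sum_const, Set.ncard_eq_toFinset_card s hs]
  · by_cases hc : c = 0
    · simp [hc]
    · rw [finsum_mem_eq_zero_of_infinite (by simpa [Function.support, hc] using hs), hs.ncard,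
        zero_smul]

theorem finsum_mem_ite_eq_ncard_smul {α M : Type*} [AddCommMonoid M] (s : Set α) (p : α → Prop)
    [DecidablePred p] (c : M) :
    ∑ᶠ a ∈ s, (if p a then c else 0) = {a | a ∈ s ∧ p a}.ncard • c := by
  rw [← finsum_mem_const_eq_ncard_smul, finsum_mem_def, finsum_mem_def]
  congr 1
  ext a
  by_cases ha : a ∈ s <;> by_cases hpa : p a <;> simp [ha, hpa]

namespace ICPaper

variable {V : Type*} {E : V → V → Prop} {VI : Set V}

theorem IsIPath.getLast?_eq {a b : V} {l : List V} (h : IsIPath E VI a b l) :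
    l.getLast? = some b :=
  h.2.2.2.1.2.2.1

theorem IsIPath.nodup {a b : V} {l : List V} (h : IsIPath E VI a b l) : l.Nodup :=
  h.2.2.2.1.2.2.2

theorem IsIPath.left_mem {a b : V} {l : List V} (h : IsIPath E VI a b l) : a ∈ l :=
  List.mem_of_mem_head? h.2.2.2.1.2.1

theorem IsIPath.right_mem {a b : V} {l : List V} (h : IsIPath E VI a b l) : b ∈ l :=
  List.mem_of_getLast? h.getLast?_eq

theorem IsIPath.eq_or_eq_of_mem_inner {a b v : V} {l : List V} (h : IsIPath E VI a b l)
    (hv : v ∈ l) (hvI : v ∈ VI) : v = a ∨ v = b := by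
  by_contra! hab
  exact h.2.2.2.2 v hv hab.1 hab.2 hvI

namespace IsICStructure

variable {K : ℕ} {i : V}

theorem existsUnique_iPath (hIC : IsICStructure E VI K) {a b : V} (ha : a ∈ VI) (hb : b ∈ VI)
    (hab : a ≠ b) : ∃! l, IsIPath E VI a b l :=
  hIC.2.2.1 a ha b hb hab

theorem exists_iPath_mem (hIC : IsICStructure E VI K) (v : V) :
    ∃ a b l, IsIPath E VI a b l ∧ v ∈ l :=
  hIC.2.2.2.1 v

theorem exists_iPath_infix (hIC : IsICStructure E VI K) {u w : V} (huw : E u w) :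
    ∃ a b l, IsIPath E VI a b l ∧ [u, w] <:+: l :=
  hIC.2.2.2.2 u w huw

theorem mem_treeVerts_self (hIC : IsICStructure E VI K) (hi : i ∈ VI) :
    i ∈ treeVerts E VI i := by
  obtain ⟨a, b, l, hab, -⟩ := hIC.exists_iPath_mem i
  obtain ⟨c, hc, hci⟩ : ∃ c ∈ VI, c ≠ i := by
    by_cases hai : a = i
    · exact ⟨b, hab.2.1, fun hbi => hab.2.2.1 (hai.trans hbi.symm)⟩
    · exact ⟨a, hab.1, hai⟩
  obtain ⟨l, hl, -⟩ := hIC.existsUnique_iPath hi hc hci.symm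
  exact ⟨c, l, hl, hl.left_mem⟩

theorem subset_treeVerts (hIC : IsICStructure E VI K) (hi : i ∈ VI) :
    VI ⊆ treeVerts E VI i := by
  intro j hj
  by_cases hji : j = i
  · subst hji
    exact hIC.mem_treeVerts_self hj
  · obtain ⟨l, hl, -⟩ := hIC.existsUnique_iPath hi hj (Ne.symm hji)
    exact ⟨j, l, hl, hl.right_mem⟩

theorem mem_treeVerts_of_adj (hIC : IsICStructure E VI K) (hi : i ∈ VI) {j : V}
    (hij : E i j) : j ∈ treeVerts E VI i := by
  obtain ⟨a, b, l, hl, hijl⟩ := hIC.exists_iPath_infix hij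
  rcases hl.eq_or_eq_of_mem_inner (hijl.subset (by simp)) hi with rfl | rfl
  · exact ⟨b, l, hl, hijl.subset (by simp)⟩
  · exact absurd hl.getLast?_eq (hl.nodup.getLast?_ne_of_infix hijl)

end IsICStructure

theorem Z_pi_single {F : Type*} [AddCommMonoid F] [DecidableEq V] {i j : V} (hjI : j ∉ VI)
    (hjT : j ∉ VNI E VI i) (c : F) :
    Z E VI (Pi.single j c) i = coeffCount E VI i j • c := by
  classical
  have hW : ∀ v ∈ VNI E VI i, Wsym E (Pi.single j c) v = if E v j then c else 0 := by
    intro v hv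
    rw [Wsym, Pi.single_eq_of_ne (ne_of_mem_of_not_mem hv hjT), finsum_mem_pi_single', zero_add]
    rfl
  rw [Z, WI, finsum_mem_pi_single', if_neg hjI, zero_add, finsum_mem_congr rfl hW,
    finsum_mem_ite_eq_ncard_smul, coeffCount]

end ICPaper

open ICPaper

theorem theorem1_necessity_c2_general {V : Type*} [DecidableEq V]
    (F : Type*) [Field F]
    (E : V → V → Prop) (VI : Set V) (K : ℕ) (hIC : IsICStructure E VI K)
    (i : V) (hi : i ∈ VI) (j : V) (hj : j ∉ treeVerts E VI i)
    (hb : coeffCount E VI i j = 1) :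
    j ∉ NplusG E i ∧
    Z E VI (Pi.single j (1 : F)) i = 1 ∧
    ¬ ∃ S ⊆ NplusG E i, ∀ x : V → F,
        Z E VI x i = x i + ∑ᶠ k ∈ S, x k := by
  classical
  have hjN : j ∉ NplusG E i := fun hij => hj (hIC.mem_treeVerts_of_adj hi hij)
  have hZ : Z E VI (Pi.single j (1 : F)) i = 1 := by
    rw [Z_pi_single (fun hjI => hj (hIC.subset_treeVerts hi hjI)) (fun hjT => hj hjT.1), hb,
      one_smul]
  refine ⟨hjN, hZ, ?_⟩
  rintro ⟨S, hS, hdec⟩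
  have hij : i ≠ j := fun hij => hj (hij ▸ hIC.mem_treeVerts_self hi)
  have h := hdec (Pi.single j 1)
  rw [hZ, Pi.single_eq_of_ne hij, finsum_mem_pi_single', if_neg fun hjS => hjN (hS hjS),
    add_zero] at h
  exact one_ne_zero h

/-- **Theorem 1, necessity of c2.** If c1 holds but `b_{i,j} = 1` for an inner vertex `i`
and a vertex `j` outside the rooted tree `T i`, then the message `x_j` occurs in `Z_i`
with coefficient `1`; since `j ∉ N^+_G(i)`, the user requesting `x_i` cannot decode `x_i`
from `Z_i`. -/
theorem theorem1_necessity_c2 {V : Type*} [Fintype V] [DecidableEq V]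
    (F : Type*) [Field F] [Fintype F] [CharP F 2]
    (E : V → V → Prop) (VI : Set V) (K : ℕ) (hIC : IsICStructure E VI K)
    (hc1 : CondC1 E VI)
    (i : V) (hi : i ∈ VI) (j : V) (hj : j ∉ treeVerts E VI i)
    (hb : coeffCount E VI i j = 1) :
    j ∉ NplusG E i ∧
    Z E VI (Pi.single j (1 : F)) i = 1 ∧
    ¬ ∃ S ⊆ NplusG E i, ∀ x : V → F,
        Z E VI x i = x i + ∑ᶠ k ∈ S, x k :=
  theorem1_necessity_c2_general F E VI K hIC i hi j hj hb
end

section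
/- Let G be a K-IC structure with inner vertex set V_I which contains no cycle consisting only of non-inner vertices. Then for every inner vertex i and every non-inner vertex j at depth ≥ 2 in T_i (i.e., j ∈ V_NI(i) \ N^+_{T_i}(i)), the quantity a_{i,j} = |{v ∈ V_NI(i) : j ∈ N^+_G(v)}| equals exactly 1. (Theorem 2, Part 1) -/
open ICPaper

/-! If `j` lies at depth `≥ 2` on the I-path `i ⋯ v₀ j ⋯ b` of `T i` and some `v ∈ V_NI(i)` also
has an edge to `j`, splice the path `i ⋯ v` of `T i`, the edge `v j` and the tail `j ⋯ b`. The
result is a walk from `i` to `b` whose intermediate vertices are non-inner; a repeated vertex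
would close a cycle of non-inner vertices, so it is an I-path, hence the unique one from `i` to
`b`, and therefore `v = v₀`. -/

namespace ICPaper

variable {V : Type*} {E : V → V → Prop} {VI : Set V}

theorem IsIPath.isChain {a b : V} {l : List V} (h : IsIPath E VI a b l) : l.IsChain E :=
  h.2.2.2.1.1

theorem exists_eq_append_cons_append_cons_of_not_nodup {l : List V} (h : ¬ l.Nodup) :
    ∃ p x s t, l = p ++ x :: (s ++ x :: t) := by
  obtain ⟨x, hx⟩ : ∃ x, [x, x].Sublist l := by simpa [List.nodup_iff_sublist] using h
  obtain ⟨r₁, r₂, rfl, hx₁, hx₂⟩ := List.cons_sublist_iff.mp hx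
  obtain ⟨p, q, rfl⟩ := List.append_of_mem hx₁
  obtain ⟨s, t, rfl⟩ := List.append_of_mem (List.singleton_sublist.mp hx₂)
  exact ⟨p, x, q ++ s, t, by simp⟩

theorem exists_isCycle_subset_of_not_nodup {l : List V} (hl : l.IsChain E) (hnd : ¬ l.Nodup) :
    ∃ c, IsCycle E c ∧ c ⊆ l := by
  obtain ⟨p, x, s, t, hl_eq⟩ := exists_eq_append_cons_append_cons_of_not_nodup hnd
  have hsub : x :: s ⊆ l := List.IsInfix.subset ⟨p, x :: t, by simp [hl_eq]⟩
  have hloop : ((x :: s) ++ [x]).IsChain E :=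
    hl.infix ⟨p, t, by simp [hl_eq]⟩
  obtain ⟨hch, -, hback⟩ := List.isChain_append.mp hloop
  by_cases hxs : (x :: s).Nodup
  · obtain ⟨a, ha⟩ : ∃ a, (x :: s).getLast? = some a :=
      ⟨_, List.getLast?_eq_some_getLast (List.cons_ne_nil x s)⟩
    exact ⟨x :: s, ⟨List.cons_ne_nil x s, hxs, hch, a, x, ha, rfl, hback a ha x rfl⟩, hsub⟩
  · obtain ⟨c, hc, hcs⟩ := exists_isCycle_subset_of_not_nodup hch hxs
    exact ⟨c, hc, fun v hv => hsub (hcs hv)⟩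
termination_by l.length
decreasing_by simp [hl_eq]; omega

theorem IsIPath.exists_eq_cons_append {a b : V} {l : List V} (h : IsIPath E VI a b l) :
    ∃ m, l = a :: m ++ [b] ∧ ∀ v ∈ m, v ∉ VI := by
  obtain ⟨-, -, hab, ⟨-, hhd, hlast, hnd⟩, hni⟩ := h
  obtain _ | ⟨a', t⟩ := l
  · simp at hhd
  obtain rfl : a' = a := by simpa using hhd
  obtain rfl | ⟨m, b', rfl⟩ := List.eq_nil_or_concat' t
  · exact absurd (by simpa using hlast) hab
  obtain rfl : b' = b := by simpa [List.getLast?_cons] using hlast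
  have hnd' := List.nodup_cons.mp hnd
  refine ⟨m, rfl, fun v hv => hni v (by simp [hv]) ?_ ?_⟩
  · rintro rfl
    exact hnd'.1 (by simp [hv])
  · rintro rfl
    exact (List.nodup_append.mp hnd'.2).2.2 v hv v (by simp) rfl

theorem isIPath_of_isChain (hNC : ¬ ∃ l, IsCycle E l ∧ ∀ v ∈ l, v ∉ VI) {a b : V} {m : List V}
    (ha : a ∈ VI) (hb : b ∈ VI) (hab : a ≠ b) (hch : (a :: m ++ [b]).IsChain E)
    (hm : ∀ v ∈ m, v ∉ VI) : IsIPath E VI a b (a :: m ++ [b]) := by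
  have hmnd : m.Nodup := by
    by_contra hnd
    obtain ⟨c, hc, hcm⟩ := exists_isCycle_subset_of_not_nodup (hch.infix ⟨[a], [b], rfl⟩) hnd
    exact hNC ⟨c, hc, fun v hv => hm v (hcm hv)⟩
  have ham : a ∉ m := fun h => hm a h ha
  have hbm : b ∉ m := fun h => hm b h hb
  have hnd : (a :: m ++ [b]).Nodup := List.nodup_cons.mpr
    ⟨by simp [ham, hab], hmnd.append (List.nodup_singleton b) (by simpa using hbm)⟩
  exact ⟨ha, hb, hab, ⟨hch, rfl, List.getLast?_concat, hnd⟩,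
    fun v hv hva hvb => hm v (by simpa [hva, hvb] using hv)⟩

theorem exists_isIPath_of_mem_VNI {i v : V} (hv : v ∈ VNI E VI i) :
    ∃ b m₁ m₂, IsIPath E VI i b (i :: (m₁ ++ v :: m₂) ++ [b]) ∧
      ∀ u ∈ m₁ ++ v :: m₂, u ∉ VI := by
  obtain ⟨⟨b, l, hl, hvl⟩, hvVI⟩ := hv
  obtain ⟨m, rfl, hm⟩ := hl.exists_eq_cons_append
  have hvm : v ∈ m := by
    have hvi : v ≠ i := fun h => hvVI (h ▸ hl.1)
    have hvb : v ≠ b := fun h => hvVI (h ▸ hl.2.1)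
    simpa [hvi, hvb] using hvl
  obtain ⟨m₁, m₂, rfl⟩ := List.append_of_mem hvm
  exact ⟨b, m₁, m₂, hl, hm⟩

theorem append_singleton_eq_of_isIPath (hNC : ¬ ∃ l, IsCycle E l ∧ ∀ v ∈ l, v ∉ VI)
    {i b b' j v : V} {m₁ m₂ m₁' m₂' : List V}
    (huniq : ∃! l, IsIPath E VI i b l)
    (h : IsIPath E VI i b (i :: (m₁ ++ j :: m₂) ++ [b])) (hm : ∀ u ∈ m₁ ++ j :: m₂, u ∉ VI)
    (h' : IsIPath E VI i b' (i :: (m₁' ++ v :: m₂') ++ [b']))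
    (hm' : ∀ u ∈ m₁' ++ v :: m₂', u ∉ VI) (hvj : E v j) :
    m₁' ++ [v] = m₁ := by
  have hchain : (i :: (m₁' ++ v :: j :: m₂) ++ [b]).IsChain E := by
    have hpre : ((i :: m₁') ++ [v]).IsChain E := h'.isChain.infix ⟨[], m₂' ++ [b'], by simp⟩
    have hsuf : (j :: m₂ ++ [b]).IsChain E := h.isChain.infix ⟨i :: m₁, [], by simp⟩
    simpa using List.isChain_append_cons_cons.mpr ⟨hpre, hvj, hsuf⟩
  have hspliced := isIPath_of_isChain hNC h.1 h.2.1 h.2.2.1 hchain (by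
    intro u hu
    simp only [List.mem_append, List.mem_cons] at hu
    rcases hu with hu | rfl | rfl | hu
    · exact hm' u (by simp [hu])
    · exact hm' u (by simp)
    · exact hm u (by simp)
    · exact hm u (by simp [hu]))
  have hsame := huniq.unique hspliced h
  exact List.append_cancel_right (by simpa using hsame)

end ICPaper

theorem theorem2_part1_general {V : Type*}
    (E : V → V → Prop) (VI : Set V) (K : ℕ) (hIC : IsICStructure E VI K)
    (hNC : ¬ ∃ l, IsCycle E l ∧ ∀ v ∈ l, v ∉ VI) :
    ∀ i ∈ VI, ∀ j ∈ VNI E VI i, j ∉ NplusT E VI i →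
      coeffCount E VI i j = 1 := by
  intro i hi j hj hjN
  obtain ⟨b, m₁, m₂, hl, hm⟩ := exists_isIPath_of_mem_VNI hj
  obtain rfl | ⟨m, v₀, rfl⟩ := List.eq_nil_or_concat' m₁
  · exact absurd ⟨b, _, hl, [], m₂ ++ [b], by simp⟩ hjN
  have hv₀ : v₀ ∈ VNI E VI i := ⟨⟨b, _, hl, by simp⟩, hm v₀ (by simp)⟩
  have hv₀j : E v₀ j := by
    simpa using hl.isChain.infix (l₁ := [v₀, j]) ⟨i :: m, m₂ ++ [b], by simp⟩
  rw [coeffCount, Set.ncard_eq_one]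
  refine ⟨v₀, Set.eq_singleton_iff_unique_mem.mpr ⟨⟨hv₀, hv₀j⟩, ?_⟩⟩
  rintro v ⟨hv, hvj⟩
  obtain ⟨b', m₁', m₂', hl', hm'⟩ := exists_isIPath_of_mem_VNI hv
  have hprefix := append_singleton_eq_of_isIPath hNC
    (hIC.2.2.1 i hi b hl.2.1 hl.2.2.1) hl hm hl' hm' hvj
  simpa using congrArg List.getLast? hprefix

/-- **Theorem 2, Part 1.** In a `K`-IC structure with no cycle consisting only of non-inner
vertices, for every inner vertex `i` and every non-inner vertex `j` at depth `≥ 2` in `T i`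
(i.e. `j ∈ V_NI(i) \ N^+_{T i}(i)`), the quantity `a_{i,j}` equals exactly `1`. -/
theorem theorem2_part1 {V : Type*} [Fintype V] [DecidableEq V]
    (E : V → V → Prop) (VI : Set V) (K : ℕ) (hIC : IsICStructure E VI K)
    (hNC : ¬ ∃ l, IsCycle E l ∧ ∀ v ∈ l, v ∉ VI) :
    ∀ i ∈ VI, ∀ j ∈ VNI E VI i, j ∉ NplusT E VI i →
      coeffCount E VI i j = 1 :=
  theorem2_part1_general E VI K hIC hNC
end

section
/- Let G be a K-IC structure with inner vertex set V_I, let i and n be distinct inner vertices, and let p and q be two distinct non-inner vertices lying on the unique I-path from i to n, with q appearing strictly after p on this I-path. Then there is no vertex j ∈ V(G) \ V(T_i) such that both (p, j) ∈ E and (q, j) ∈ E; otherwise there would exist two distinct I-paths between some pair of inner vertices, contradicting the IC-structure property. (Claim of Lemma 1, Case i) -/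
open ICPaper

/-!
Suppose `p → j` and `q → j`, with `p` before `q` on the I-path `l` and `j ∉ l`. Then
`p ⇝ q → j`, following `l` from `p` to `q`, bypasses the edge `p → j`. That edge lies on some
I-path `m` from `a` to `b`; replacing it in `m` by the bypass gives a walk from `a` to `b`
with non-inner interior that avoids the edge `p → j`. Erasing its loops yields an I-path from
`a` to `b` other than `m`, contradicting uniqueness of I-paths.
-/

namespace ICPaper

variable {V : Type*} {E R : V → V → Prop} {VI : Set V}

def UniqueIPaths (E : V → V → Prop) (VI : Set V) : Prop :=
  ∀ ⦃a b : V⦄ ⦃l₁ l₂ : List V⦄, IsIPath E VI a b l₁ → IsIPath E VI a b l₂ → l₁ = l₂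

theorem IsICStructure.uniqueIPaths {K : ℕ} (h : IsICStructure E VI K) : UniqueIPaths E VI :=
  fun a b _ _ h₁ h₂ => (h.2.2.1 a h₁.1 b h₁.2.1 h₁.2.2.1).unique h₁ h₂

def deleteEdge (E : V → V → Prop) (u w : V) : V → V → Prop :=
  fun x y => E x y ∧ ¬(x = u ∧ y = w)

theorem isChain_deleteEdge_of_notMem_dropLast {u w : V} {L : List V} (hL : L.IsChain E)
    (hu : u ∉ L.dropLast) : L.IsChain (deleteEdge E u w) :=
  List.isChain_iff_forall_rel_of_append_cons_cons.2 fun _ _ _ _ h =>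
    ⟨List.isChain_iff_forall_rel_of_append_cons_cons.1 hL h, by
      rintro ⟨rfl, -⟩; exact hu (by simp [h])⟩

theorem exists_isPathList_sublist {b : V} :
    ∀ {a : V} {C : List V}, C.IsChain R → C.head? = some a → C.getLast? = some b →
      ∃ P, P.Sublist C ∧ IsPathList R a b P
  | _, [], _, ha, _ => by simp at ha
  | _, [c], _, ha, hb => ⟨[c], .refl _, .singleton c, ha, hb, List.nodup_singleton c⟩
  | a, c :: d :: C, hC, ha, hb => by
    obtain rfl : c = a := by simpa using ha
    obtain ⟨P, hPC, hPch, hPd, hPb, hPnd⟩ :=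
      exists_isPathList_sublist hC.of_cons rfl (by simpa using hb)
    by_cases haP : c ∈ P
    · obtain ⟨X, Y, rfl⟩ := List.append_of_mem haP
      refine ⟨c :: Y,
        (List.sublist_append_right X _).trans (hPC.trans (List.sublist_cons_self _ _)),
        hPch.right_of_append, rfl, ?_, hPnd.sublist (List.sublist_append_right X _)⟩
      rwa [List.getLast?_append_of_ne_nil _ (List.cons_ne_nil _ _)] at hPb
    · refine ⟨c :: P, hPC.cons_cons c, hPch.cons ?_, rfl, ?_, hPnd.cons haP⟩
      · simpa [hPd] using hC.rel
      · obtain ⟨e, P', rfl⟩ := List.exists_cons_of_ne_nil (show P ≠ [] by rintro rfl; simp at hPd)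
        simpa using hPb

theorem UniqueIPaths.isChain_of_walk (huniq : UniqueIPaths E VI) {a b : V} {m C : List V}
    (hm : IsIPath E VI a b m) (hRE : ∀ ⦃x y⦄, R x y → E x y) (hC : C.IsChain R)
    (ha : C.head? = some a) (hb : C.getLast? = some b)
    (hCVI : ∀ v ∈ C, v ≠ a → v ≠ b → v ∉ VI) : m.IsChain R := by
  obtain ⟨P, hPC, hP⟩ := exists_isPathList_sublist hC ha hb
  have hPm : P = m :=
    huniq ⟨hm.1, hm.2.1, hm.2.2.1, ⟨hP.1.imp hRE, hP.2⟩, fun v hv => hCVI v (hPC.subset hv)⟩ hm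
  exact hPm ▸ hP.1

theorem IsIPath.notMem_of_mem_between {a b x y v : V} {L₁ M L₂ : List V}
    (hl : IsIPath E VI a b (L₁ ++ x :: (M ++ y :: L₂))) (hv : v ∈ M) : v ∉ VI := by
  obtain ⟨-, -, -, ⟨-, ha, hb, hnd⟩, hVI⟩ := hl
  refine hVI v (by simp [hv]) ?_ ?_
  · rintro rfl
    cases L₁ <;> simp_all
  · grind [List.mem_of_getLast?, List.getLast?_append, List.nodup_append]

theorem UniqueIPaths.no_bypass (huniq : UniqueIPaths E VI) {a b u w : V} {s t X : List V}
    (hm : IsIPath E VI a b (s ++ u :: w :: t)) (hX : (u :: X ++ [w]).IsChain E)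
    (hXne : X ≠ []) (huX : u ∉ X) (hwX : w ∉ X) (hXVI : ∀ v ∈ X, v ∉ VI) : False := by
  obtain ⟨-, -, -, ⟨hmE, hma, hmb, hnd⟩, hmVI⟩ := id hm
  have hus : u ∉ s := fun h => List.disjoint_of_nodup_append hnd h List.mem_cons_self
  have hut : u ∉ w :: t := (List.nodup_cons.1 hnd.of_append_right).1
  obtain ⟨x, X', rfl⟩ := List.exists_cons_of_ne_nil hXne
  have hs : (s ++ [u]).IsChain (deleteEdge E u w) :=
    isChain_deleteEdge_of_notMem_dropLast (hmE.prefix (by simp)) (by simpa)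
  have hbypass : (u :: (x :: X' ++ [w])).IsChain (deleteEdge E u w) := by
    refine List.isChain_cons.2 ⟨?_, isChain_deleteEdge_of_notMem_dropLast hX.of_cons ?_⟩
    · simpa [deleteEdge] using ⟨hX.rel, fun h => hwX (h ▸ List.mem_cons_self)⟩
    · rwa [List.dropLast_concat]
  have ht : ([w] ++ t).IsChain (deleteEdge E u w) :=
    isChain_deleteEdge_of_notMem_dropLast (hmE.suffix ⟨s ++ [u], by simp⟩)
      fun h => hut (List.dropLast_subset _ h)
  have hC : (s ++ [u] ++ x :: X' ++ [w] ++ t).IsChain (deleteEdge E u w) :=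
    (by simpa using hs.append_overlap hbypass (by simp) :
      (s ++ [u] ++ x :: X' ++ [w]).IsChain _).append_overlap ht (by simp)
  have hm' := huniq.isChain_of_walk hm (fun _ _ h => h.1) hC
    (by rw [← hma]; cases s <;> simp)
    (by rw [← hmb]; simp [List.getLast?_append, List.getLast?_cons]) ?_
  · exact ((hm'.infix ⟨s, t, by simp⟩ : [u, w].IsChain _).rel).2 ⟨rfl, rfl⟩
  · intro v hv hva hvb
    by_cases hvX : v ∈ x :: X'
    · exact hXVI v hvX
    · exact hmVI v (by simp at hv hvX ⊢; tauto) hva hvb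

end ICPaper

theorem no_common_out_neighbour_outside_tree_general {V : Type*}
    (E : V → V → Prop) (VI : Set V) (K : ℕ) (hIC : IsICStructure E VI K)
    (i n : V)
    (l : List V) (hl : IsIPath E VI i n l)
    (p q : V) (hq : q ∉ VI)
    (horder : ∃ l1 l2 l3, l = l1 ++ p :: (l2 ++ q :: l3)) :
    ¬ ∃ j, j ∉ treeVerts E VI i ∧ E p j ∧ E q j := by
  rintro ⟨j, hjT, hpj, hqj⟩
  obtain ⟨l1, l2, l3, rfl⟩ := horder
  have hjl : j ∉ l1 ++ p :: (l2 ++ q :: l3) := fun h => hjT ⟨n, _, hl, h⟩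
  have hpl : p ∉ l2 ++ q :: l3 := (List.nodup_cons.1 hl.2.2.2.1.2.2.2.of_append_right).1
  obtain ⟨a, b, m, hm, s, t, rfl⟩ := hIC.2.2.2.2 p j hpj
  refine hIC.uniqueIPaths.no_bypass (s := s) (t := t) (X := l2 ++ [q]) (by simpa using hm)
    ?_ (by simp) (fun h => hpl (by simp at h ⊢; tauto)) (fun h => hjl (by simp at h ⊢; tauto))
    ?_
  · have hseg : (p :: l2 ++ [q]).IsChain E := hl.2.2.2.1.1.infix ⟨l1, l3, by simp⟩
    simpa using List.isChain_append_cons_cons.2 ⟨hseg, hqj, .singleton j⟩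
  · intro v hv
    rcases List.mem_append.1 hv with hv | hv
    · exact hl.notMem_of_mem_between hv
    · exact List.mem_singleton.1 hv ▸ hq

/-- **Claim of Lemma 1, Case i.** In a `K`-IC structure, let `i` and `n` be distinct inner
vertices and let `p` and `q` be two distinct non-inner vertices lying on the unique I-path
from `i` to `n`, with `q` appearing strictly after `p`. Then there is no vertex `j` outside
the rooted tree `T i` such that both `(p, j) ∈ E` and `(q, j) ∈ E`. -/
theorem no_common_out_neighbour_outside_tree {V : Type*} [Fintype V] [DecidableEq V]
    (E : V → V → Prop) (VI : Set V) (K : ℕ) (hIC : IsICStructure E VI K)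
    (i n : V) (hi : i ∈ VI) (hn : n ∈ VI) (hin : i ≠ n)
    (l : List V) (hl : IsIPath E VI i n l)
    (p q : V) (hp : p ∉ VI) (hq : q ∉ VI) (hpq : p ≠ q)
    (horder : ∃ l1 l2 l3, l = l1 ++ p :: (l2 ++ q :: l3)) :
    ¬ ∃ j, j ∉ treeVerts E VI i ∧ E p j ∧ E q j :=
  no_common_out_neighbour_outside_tree_general E VI K hIC i n l hl p q hq horder
end
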